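/- Let n ≥ 1 and let f, g ∈ L²(H_n; ℂ) be compactly supported with Sf = 0 almost everywhere on ℝ^{2n}. Then (Tf) *_H g = T(f *_H g) almost everywhere on H_n. -/

import Mathlib

open MeasureTheory

/-- The Heisenberg group `H_n`, as a manifold, is `ℝⁿ × ℝⁿ × ℝ`. -/
abbrev Heis (n : ℕ) := (Fin n → ℝ) × (Fin n → ℝ) × ℝ

/-- The Euclidean inner product on `ℝⁿ`. -/
def dot {n : ℕ} (a b : Fin n → ℝ) : ℝ := ∑ i, a i * b i

/-- Convolution with respect to the Heisenberg group structure
`(x,y,z)·(x',y',z') = (x+x', y+y', z+z'+⟨x,y'⟩)`: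
`(f *_H g)(p) = ∫ f(q) g(q⁻¹ p) dq`. -/
noncomputable def hconv {n : ℕ} (f g : Heis n → ℂ) : Heis n → ℂ :=
  fun p => ∫ q : Heis n,
    f q * g (p.1 - q.1, p.2.1 - q.2.1, p.2.2 - q.2.2 + dot q.1 q.2.1 - dot q.1 p.2.1)

/-- The operator `Sf(x,y) = ∫_ℝ f(x,y,z) dz`. -/
noncomputable def S {n : ℕ} (f : Heis n → ℂ) : (Fin n → ℝ) × (Fin n → ℝ) → ℂ :=
  fun xy => ∫ z : ℝ, f (xy.1, xy.2, z)

/-- The operator `Tf(x,y,z) = ∫_{-∞}^z f(x,y,t) dt`. -/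
noncomputable def T {n : ℕ} (f : Heis n → ℂ) : Heis n → ℂ :=
  fun p => ∫ t in Set.Iic p.2.2, f (p.1, p.2.1, t)

/-- A function vanishes almost everywhere outside some compact set. -/
def AECompactlySupported {n : ℕ} (f : Heis n → ℂ) : Prop :=
  ∃ K : Set (Heis n), IsCompact K ∧ ∀ᵐ p ∂(volume), p ∉ K → f p = 0

/-!
With `c(s) = (0, 0, s)` central, `T f q = ∫_{s ≥ 0} f (q c(s)⁻¹)`. Swapping the integrals and
substituting `q ↦ q c(s)`, which preserves Haar measure and satisfies
`(q c(s))⁻¹ p = q⁻¹ (p c(s)⁻¹)` by centrality, turns `((T f) *_H g)(p)` into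
`∫_{s ≥ 0} (f *_H g)(p c(s)⁻¹) = T (f *_H g)(p)`.

Fubini is justified at every point `p` once `f` and `g` are replaced by a.e.-equal representatives
with compact support: then only a compact range of `s` contributes, and on that range the
integrand on `H_n × ℝ` is a product of two `L²` functions.
-/

open Set Filter Function

section ProductMeasure

variable {α G : Type*} [MeasurableSpace α] [MeasurableSpace G]
  [AddGroup G] [MeasurableAdd G] [MeasurableSub₂ G] {μ : Measure α} {ν : Measure G}
  [SFinite μ] [SFinite ν] [ν.IsAddRightInvariant] {e : α → G}

theorem measurePreserving_snd_sub (he : Measurable e) :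
    MeasurePreserving (fun w : α × G => (w.1, w.2 - e w.1)) (μ.prod ν) (μ.prod ν) :=
  (MeasurePreserving.id μ).skew_product (measurable_snd.sub (he.comp measurable_fst))
    (ae_of_all _ fun a => (measurePreserving_sub_right ν (e a)).map_eq)

theorem measurePreserving_fst_sub (he : Measurable e) :
    MeasurePreserving (fun w : G × α => (w.1 - e w.2, w.2)) (ν.prod μ) (ν.prod μ) :=
  (Measure.measurePreserving_swap.comp (measurePreserving_snd_sub he)).comp
    Measure.measurePreserving_swap

end ProductMeasure

theorem MeasureTheory.MemLp.mul_prod {α β 𝕜 : Type*} [MeasurableSpace α] [MeasurableSpace β]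
    [NormedRing 𝕜] [NormMulClass 𝕜] {μ : Measure α} {ν : Measure β} [SFinite ν]
    {u : α → 𝕜} {v : β → 𝕜} (hu : MemLp u 2 μ) (hv : MemLp v 2 ν) :
    MemLp (fun w : α × β => u w.1 * v w.2) 2 (μ.prod ν) := by
  refine (memLp_two_iff_integrable_sq_norm (hu.1.comp_fst.mul hv.1.comp_snd)).2 ?_
  simpa only [Pi.mul_apply, norm_mul, mul_pow] using
    ((memLp_two_iff_integrable_sq_norm hu.1).1 hu).mul_prod
      ((memLp_two_iff_integrable_sq_norm hv.1).1 hv)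

namespace Heis

variable {n : ℕ}

-- Instance search does not see `volume` on a product type as a product measure.
instance isAddHaarMeasure_volume : (volume : Measure (Heis n)).IsAddHaarMeasure := by
  rw [Measure.volume_eq_prod, Measure.volume_eq_prod]
  exact Measure.prod.instIsAddHaarMeasure _ _

instance isNegInvariant_volume : (volume : Measure (Heis n)).IsNegInvariant :=
  have : (volume : Measure (Heis n)).Regular :=
    Measure.Regular.of_sigmaCompactSpace_of_isLocallyFiniteMeasure _
  Measure.IsAddHaarMeasure.isNegInvariant_of_regular _

/-- `q⁻¹ · p` in the Heisenberg group. -/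
def invMul (q p : Heis n) : Heis n :=
  (p.1 - q.1, p.2.1 - q.2.1, p.2.2 - q.2.2 + dot q.1 q.2.1 - dot q.1 p.2.1)

def central (s : ℝ) : Heis n := (0, 0, s)

theorem hconv_apply (f g : Heis n → ℂ) (p : Heis n) :
    hconv f g p = ∫ q, f q * g (invMul q p) :=
  rfl

theorem sub_central (q : Heis n) (s : ℝ) : q - central s = (q.1, q.2.1, q.2.2 - s) :=
  Prod.ext (sub_zero _) (Prod.ext (sub_zero _) rfl)

theorem measurable_central : Measurable (central : ℝ → Heis n) :=
  measurable_const.prodMk (measurable_const.prodMk measurable_id)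

theorem invMul_sub_central (q p : Heis n) (s : ℝ) :
    invMul (q - central s) (p - central s) = invMul q p := by
  simp only [invMul, sub_central]
  ring_nf

@[fun_prop]
theorem _root_.Continuous.dot {α : Type*} [TopologicalSpace α] {a b : α → Fin n → ℝ}
    (ha : Continuous a) (hb : Continuous b) : Continuous fun w => _root_.dot (a w) (b w) := by
  unfold _root_.dot
  fun_prop

theorem measurePreserving_invMul (p : Heis n) :
    MeasurePreserving (fun q : Heis n => invMul q p) := by
  have hassoc := volume_preserving_prodAssoc (α₁ := Fin n → ℝ) (β₁ := Fin n → ℝ) (γ₁ := ℝ)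
  have hshear := measurePreserving_snd_sub (μ := volume) (ν := (volume : Measure ℝ))
    (e := fun v : (Fin n → ℝ) × (Fin n → ℝ) => dot v.1 v.2 - dot v.1 p.2.1)
    (by fun_prop : Continuous _).measurable
  rw [← Measure.volume_eq_prod] at hshear
  have hfactor : (fun q : Heis n => invMul q p) = (fun q => p - q) ∘
      (MeasurableEquiv.prodAssoc ∘ (fun w => (w.1, w.2 - (dot w.1.1 w.1.2 - dot w.1.1 p.2.1))) ∘
        MeasurableEquiv.prodAssoc.symm) := by
    funext q
    refine Prod.ext rfl (Prod.ext rfl ?_)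
    show p.2.2 - q.2.2 + dot q.1 q.2.1 - dot q.1 p.2.1
      = p.2.2 - (q.2.2 - (dot q.1 q.2.1 - dot q.1 p.2.1))
    ring
  rw [hfactor]
  exact (Measure.measurePreserving_sub_left volume p).comp
    (hassoc.comp (hshear.comp hassoc.symm))

theorem T_apply_eq_setIntegral (h : Heis n → ℂ) (q : Heis n) : T h q = ∫ s in Ici 0, h (q - central s) := by
  have := (Measure.measurePreserving_sub_left volume q.2.2).setIntegral_preimage_emb
    (measurableEmbedding_subLeft q.2.2) (fun t => h (q.1, q.2.1, t)) (Iic q.2.2)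
  have hpre : (fun t => q.2.2 - t) ⁻¹' Iic q.2.2 = Ici 0 := by
    ext
    simp
  simp only [sub_central]
  rw [← hpre]
  exact this.symm

theorem T_congr_ae {h h' : Heis n → ℂ} (hh : h =ᵐ[volume] h') : T h =ᵐ[volume] T h' := by
  have hslide : Measure.QuasiMeasurePreserving (fun w : Heis n × ℝ => w.1 - central w.2)
      (volume.prod volume) volume :=
    Measure.quasiMeasurePreserving_fst.comp
      (measurePreserving_fst_sub measurable_central).quasiMeasurePreserving
  filter_upwards [Measure.ae_ae_of_ae_prod (hslide.ae_eq hh)] with q hq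
  rw [T_apply_eq_setIntegral, T_apply_eq_setIntegral]
  exact integral_congr_ae (ae_restrict_of_ae hq)

theorem hconv_congr_ae {f f' g g' : Heis n → ℂ} (hf : f =ᵐ[volume] f') (hg : g =ᵐ[volume] g') :
    hconv f g = hconv f' g' := by
  funext p
  rw [hconv_apply, hconv_apply]
  refine integral_congr_ae ?_
  filter_upwards [hf, (measurePreserving_invMul p).quasiMeasurePreserving.ae_eq hg]
    with q hfq hgq
  simp only [comp_apply] at hgq
  rw [hfq, hgq]

theorem hconv_T_apply_eq_setIntegral_of_integrable {f g : Heis n → ℂ} {p : Heis n}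
    (hint : Integrable fun w : Heis n × ℝ => f (w.1 - central w.2) * g (invMul w.1 p)) :
    hconv (T f) g p = T (hconv f g) p := by
  have hint' : Integrable (uncurry fun q s => f (q - central s) * g (invMul q p))
      (volume.prod (volume.restrict (Ici 0))) :=
    hint.mono_measure (Measure.prod_mono le_rfl Measure.restrict_le_self)
  calc hconv (T f) g p = ∫ q, ∫ s in Ici 0, f (q - central s) * g (invMul q p) := by
        simp only [hconv_apply, T_apply_eq_setIntegral, integral_mul_const]
    _ = ∫ s in Ici 0, ∫ q, f (q - central s) * g (invMul q p) := integral_integral_swap hint'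
    _ = ∫ s in Ici 0, ∫ q, f q * g (invMul q (p - central s)) := by
        congr 1
        funext s
        rw [← integral_sub_right_eq_self (fun q => f q * g (invMul q (p - central s)))
          (central s)]
        simp only [invMul_sub_central]
    _ = T (hconv f g) p := by simp only [T_apply_eq_setIntegral, hconv_apply]

theorem exists_isCompact_mem_of_mul_ne_zero {f g : Heis n → ℂ} (hf : HasCompactSupport f)
    (hg : HasCompactSupport g) (p : Heis n) :
    ∃ I : Set ℝ, IsCompact I ∧ ∀ q s, f (q - central s) * g (invMul q p) ≠ 0 → s ∈ I := by
  refine ⟨(fun w : Heis n × Heis n =>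
      p.2.2 + dot w.1.1 w.1.2.1 - dot w.1.1 p.2.1 - w.2.2.2 - w.1.2.2) '' (tsupport f ×ˢ tsupport g),
    (hf.prod hg).image (by fun_prop), fun q s hfg => ?_⟩
  obtain ⟨hfq, hgq⟩ := mul_ne_zero_iff.1 hfg
  refine ⟨(q - central s, invMul q p), ⟨subset_tsupport f hfq, subset_tsupport g hgq⟩, ?_⟩
  simp only [sub_central, invMul]
  ring

theorem integrable_sub_central_mul_invMul {f g : Heis n → ℂ} (hf : MemLp f 2 volume)
    (hg : MemLp g 2 volume) (hfc : HasCompactSupport f) (hgc : HasCompactSupport g)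
    (p : Heis n) :
    Integrable fun w : Heis n × ℝ => f (w.1 - central w.2) * g (invMul w.1 p) := by
  obtain ⟨I, hI, hfgI⟩ := exists_isCompact_mem_of_mul_ne_zero hfc hgc p
  set χ : ℝ → ℂ := I.indicator fun _ => 1
  have hχ : MemLp χ 2 volume :=
    memLp_indicator_const 2 hI.measurableSet 1 (Or.inr hI.measure_lt_top.ne)
  have hF : MemLp (fun w : Heis n × ℝ => f (w.1 - central w.2) * χ w.2) 2 volume :=
    (hf.mul_prod hχ).comp_measurePreserving (measurePreserving_fst_sub measurable_central)
  have hG : MemLp (fun w : Heis n × ℝ => g (invMul w.1 p) * χ w.2) 2 volume :=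
    (hg.comp_measurePreserving (measurePreserving_invMul p)).mul_prod hχ
  convert hF.integrable_mul hG using 1
  funext ⟨q, s⟩
  by_cases hs : s ∈ I
  · simp [χ, hs]
  · have hzero : f (q - central s) * g (invMul q p) = 0 := by_contra fun h => hs (hfgI q s h)
    simp [χ, hs, hzero]

theorem _root_.AECompactlySupported.exists_hasCompactSupport_ae_eq {h : Heis n → ℂ}
    (hc : AECompactlySupported h) : ∃ h' : Heis n → ℂ, HasCompactSupport h' ∧ h' =ᵐ[volume] h := by
  obtain ⟨K, hK, hKh⟩ := hc
  refine ⟨K.indicator h, HasCompactSupport.intro hK fun q hq => indicator_of_notMem hq h, ?_⟩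
  filter_upwards [hKh] with q hq
  by_cases hqK : q ∈ K
  · exact indicator_of_mem hqK h
  · rw [indicator_of_notMem hqK, hq hqK]

end Heis

theorem hconv_T_left_general (n : ℕ) (f g : Heis n → ℂ)
    (hf : MemLp f 2 volume) (hg : MemLp g 2 volume)
    (hfc : AECompactlySupported f) (hgc : AECompactlySupported g) :
    hconv (T f) g =ᵐ[volume] T (hconv f g) := by
  obtain ⟨f', hf'c, hf'⟩ := hfc.exists_hasCompactSupport_ae_eq
  obtain ⟨g', hg'c, hg'⟩ := hgc.exists_hasCompactSupport_ae_eq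
  have hcompact : hconv (T f') g' = T (hconv f' g') := funext fun p =>
    Heis.hconv_T_apply_eq_setIntegral_of_integrable <| Heis.integrable_sub_central_mul_invMul
      (hf.ae_eq hf'.symm) (hg.ae_eq hg'.symm) hf'c hg'c p
  refine EventuallyEq.of_eq ?_
  rw [Heis.hconv_congr_ae (Heis.T_congr_ae hf'.symm) hg'.symm, hcompact,
    Heis.hconv_congr_ae hf' hg']

/-- For compactly supported `f, g ∈ L²(H_n)` with `Sf = 0` a.e.,
`(Tf) *_H g = T(f *_H g)` a.e. on `H_n`. -/
theorem hconv_T_left (n : ℕ) (hn : 1 ≤ n) (f g : Heis n → ℂ)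
    (hf : MemLp f 2 volume) (hg : MemLp g 2 volume)
    (hfc : AECompactlySupported f) (hgc : AECompactlySupported g)
    (hSf : S f =ᵐ[volume] 0) :
    hconv (T f) g =ᵐ[volume] T (hconv f g) :=
  hconv_T_left_general n f g hf hg hfc hgc
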